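/- Covariance increment bound (increment part of Lemma 3.2): suppose ‖A_{t+1}‖ ≤ A_max. Then the DEKI sample covariances satisfy ‖C_{t+1} − C_t‖_F ≤ 2h(A_max + α)·E_t² + h²(A_max + α)²·E_t³. In particular, if additionally E_0 > 0, h ≤ min(α/(J(A_max + α)²), J/α)·E_0^{-1} and ‖A_s‖ ≤ A_max for all s ≥ 1, then there exists a constant K > 0 depending only on h, α, J and A_max such that ‖C_{t+1} − C_t‖_F ≤ K/(t+1)² for all t ∈ ℕ. -/

import Mathlib

open Matrix BigOperators

noncomputable section

/-- Sample mean of an ensemble. -/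
def ensMean {d : ℕ} (J : ℕ) (z : Fin J → Fin d → ℝ) : Fin d → ℝ :=
  (J : ℝ)⁻¹ • ∑ j, z j

/-- Ensemble spread `e^{(j)} = z^{(j)} - z̄`. -/
def ensSpread {d : ℕ} (J : ℕ) (z : Fin J → Fin d → ℝ) (j : Fin J) : Fin d → ℝ :=
  z j - ensMean J z

/-- Sample covariance `C = (1/J) ∑_j e^{(j)} (e^{(j)})ᵀ`. -/
def ensCov {d : ℕ} (J : ℕ) (z : Fin J → Fin d → ℝ) : Matrix (Fin d) (Fin d) ℝ :=
  (J : ℝ)⁻¹ • ∑ j, vecMulVec (ensSpread J z j) (ensSpread J z j)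

/-- Squared Euclidean norm of a vector in `ℝ^d`. -/
def enormSq {d : ℕ} (v : Fin d → ℝ) : ℝ := ∑ i, (v i)^2

/-- Ensemble spread energy `E = (1/J)∑_j ‖e^{(j)}‖²`. -/
def ensEnergy {d : ℕ} (J : ℕ) (z : Fin J → Fin d → ℝ) : ℝ :=
  (J : ℝ)⁻¹ * ∑ j, enormSq (ensSpread J z j)

/-- The (Euclidean) operator norm of a square matrix. -/
def opNorm {d : ℕ} (M : Matrix (Fin d) (Fin d) ℝ) : ℝ :=
  ‖Matrix.toEuclideanCLM (𝕜 := ℝ) M‖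

/-- Frobenius norm of a matrix. -/
def frobNorm {n m : ℕ} (M : Matrix (Fin n) (Fin m) ℝ) : ℝ :=
  Real.sqrt (∑ i, ∑ j, (M i j)^2)

/-! The DEKI update moves every particle by the same affine map with linear part
`I - h C B`, `B = A^{(α)}_{t+1}`, so the spreads transform linearly and
`C_{t+1} - C_t = h² CBCBC - 2h CBC`. Since `‖C‖_F ≤ tr C = E`, submultiplicativity gives the
increment bound. Taking traces gives `E_{t+1} ≤ E_t - 2(hα/J)E_t² + h²(A_max+α)²E_t³`, because
`tr(CBC) ≥ α‖C‖_F² ≥ αE²/J` (`C` is a Gram matrix of rank at most `J`). Under the step-size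
condition the cubic term is at most `(hα/J)E_t²`, so `E_{t+1} ≤ E_t - (hα/J)E_t²`, hence
`E_t ≤ J/(hα(t+1))`, and the increment bound becomes `K/(t+1)²`. -/

section MatrixNorms

variable {l n m : ℕ}

section Frobenius

attribute [local instance] Matrix.frobeniusNormedAddCommGroup Matrix.frobeniusNormedSpace

theorem frobNorm_eq_norm (M : Matrix (Fin n) (Fin m) ℝ) : frobNorm M = ‖M‖ := by
  simp [frobNorm, Matrix.frobenius_norm_def, Real.sqrt_eq_rpow]

theorem frobNorm_nonneg (M : Matrix (Fin n) (Fin m) ℝ) : 0 ≤ frobNorm M :=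
  Real.sqrt_nonneg _

theorem frobNorm_transpose (M : Matrix (Fin n) (Fin m) ℝ) : frobNorm Mᵀ = frobNorm M := by
  simp only [frobNorm_eq_norm, Matrix.frobenius_norm_transpose]

theorem frobNorm_mul_le (M : Matrix (Fin l) (Fin n) ℝ) (N : Matrix (Fin n) (Fin m) ℝ) :
    frobNorm (M * N) ≤ frobNorm M * frobNorm N := by
  simp only [frobNorm_eq_norm, Matrix.frobenius_norm_mul]

theorem frobNorm_smul (c : ℝ) (M : Matrix (Fin n) (Fin m) ℝ) :
    frobNorm (c • M) = |c| * frobNorm M := by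
  simp only [frobNorm_eq_norm, norm_smul, Real.norm_eq_abs]

theorem frobNorm_sub_le (M N : Matrix (Fin n) (Fin m) ℝ) :
    frobNorm (M - N) ≤ frobNorm M + frobNorm N := by
  simp only [frobNorm_eq_norm, norm_sub_le]

end Frobenius

theorem frobNorm_sq (M : Matrix (Fin n) (Fin m) ℝ) : frobNorm M ^ 2 = ∑ i, ∑ j, M i j ^ 2 :=
  Real.sq_sqrt (by positivity)

theorem frobNorm_sq_eq_trace (M : Matrix (Fin n) (Fin m) ℝ) : frobNorm M ^ 2 = trace (Mᵀ * M) := by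
  rw [frobNorm_sq, Finset.sum_comm]
  simp [Matrix.trace, Matrix.mul_apply, sq]

theorem trace_mul_le_frobNorm_mul (M : Matrix (Fin n) (Fin m) ℝ) (N : Matrix (Fin m) (Fin n) ℝ) :
    trace (M * N) ≤ frobNorm M * frobNorm N := by
  rw [← frobNorm_transpose N, frobNorm, frobNorm, ← Fintype.sum_prod_type',
    ← Fintype.sum_prod_type']
  simpa [Matrix.trace, Matrix.mul_apply, Fintype.sum_prod_type] using
    Real.sum_mul_le_sqrt_mul_sqrt Finset.univ (fun x : Fin n × Fin m => M x.1 x.2)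
      (fun x => N x.2 x.1)

theorem sq_trace_le_card_mul_frobNorm_sq (M : Matrix (Fin n) (Fin n) ℝ) :
    trace M ^ 2 ≤ n * frobNorm M ^ 2 := by
  calc trace M ^ 2 ≤ n * ∑ i, M i i ^ 2 := by
        simpa [Matrix.trace] using
          sq_sum_le_card_mul_sum_sq (s := Finset.univ) (f := fun i => M i i)
    _ ≤ n * frobNorm M ^ 2 := by
        rw [frobNorm_sq]
        gcongr with i
        exact Finset.single_le_sum (f := fun j => M i j ^ 2) (fun _ _ => sq_nonneg _)
          (Finset.mem_univ i)

theorem frobNorm_transpose_mul_self_le_trace (Y : Matrix (Fin m) (Fin n) ℝ) :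
    frobNorm (Yᵀ * Y) ≤ trace (Yᵀ * Y) := by
  calc frobNorm (Yᵀ * Y) ≤ frobNorm Yᵀ * frobNorm Y := frobNorm_mul_le _ _
    _ = trace (Yᵀ * Y) := by rw [frobNorm_transpose, ← sq, frobNorm_sq_eq_trace]

theorem sq_trace_transpose_mul_self_le (Y : Matrix (Fin m) (Fin n) ℝ) :
    trace (Yᵀ * Y) ^ 2 ≤ m * frobNorm (Yᵀ * Y) ^ 2 := by
  have hGram : frobNorm (Yᵀ * Y) ^ 2 = frobNorm (Y * Yᵀ) ^ 2 := by
    simp only [frobNorm_sq_eq_trace, Matrix.transpose_mul, Matrix.transpose_transpose,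
      Matrix.mul_assoc]
    rw [Matrix.trace_mul_comm]
    simp only [Matrix.mul_assoc]
  rw [hGram, Matrix.trace_mul_comm]
  exact sq_trace_le_card_mul_frobNorm_sq _

theorem enormSq_eq_norm_sq (v : Fin n → ℝ) : enormSq v = ‖WithLp.toLp 2 v‖ ^ 2 := by
  simp [enormSq, EuclideanSpace.real_norm_sq_eq]

theorem opNorm_nonneg (M : Matrix (Fin n) (Fin n) ℝ) : 0 ≤ opNorm M := norm_nonneg _

theorem enormSq_mulVec_le (M : Matrix (Fin n) (Fin n) ℝ) (v : Fin n → ℝ) :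
    enormSq (M *ᵥ v) ≤ opNorm M ^ 2 * enormSq v := by
  rw [enormSq_eq_norm_sq, enormSq_eq_norm_sq, ← mul_pow, ← Matrix.toEuclideanCLM_toLp]
  gcongr
  exact (Matrix.toEuclideanCLM (𝕜 := ℝ) M).le_opNorm _

theorem frobNorm_mul_le_opNorm_mul (M : Matrix (Fin n) (Fin n) ℝ) (X : Matrix (Fin n) (Fin m) ℝ) :
    frobNorm (M * X) ≤ opNorm M * frobNorm X := by
  have hcols : ∀ N : Matrix (Fin n) (Fin m) ℝ, frobNorm N ^ 2 = ∑ k, enormSq (Nᵀ k) := fun N => by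
    rw [frobNorm_sq, Finset.sum_comm]; rfl
  rw [← pow_le_pow_iff_left₀ (frobNorm_nonneg _)
    (mul_nonneg (opNorm_nonneg M) (frobNorm_nonneg X)) two_ne_zero, mul_pow, hcols, hcols,
    Finset.mul_sum]
  gcongr with k
  have hcol : (M * X)ᵀ k = M *ᵥ Xᵀ k := by
    ext i
    simp [Matrix.mul_apply, Matrix.mulVec, dotProduct]
  rw [hcol]
  exact enormSq_mulVec_le M (Xᵀ k)

theorem opNorm_add_smul_one_le (M : Matrix (Fin n) (Fin n) ℝ) {α : ℝ} (hα : 0 ≤ α) :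
    opNorm (M + α • 1) ≤ opNorm M + α := by
  unfold opNorm
  rw [map_add, _root_.map_smul, _root_.map_one]
  refine (norm_add_le _ _).trans (add_le_add_right ?_ _)
  rw [norm_smul, Real.norm_eq_abs, abs_of_nonneg hα]
  exact mul_le_of_le_one_right hα ContinuousLinearMap.norm_id_le

end MatrixNorms

section Ensemble

variable {d J : ℕ}

theorem ensCov_eq_smul_gram (z : Fin J → Fin d → ℝ) :
    ensCov J z = (J : ℝ)⁻¹ • ((of (ensSpread J z))ᵀ * of (ensSpread J z)) := by
  rw [ensCov]
  congr 1
  ext i k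
  simp [Matrix.sum_apply, Matrix.mul_apply, Matrix.vecMulVec_apply]

theorem ensCov_transpose (z : Fin J → Fin d → ℝ) : (ensCov J z)ᵀ = ensCov J z := by
  rw [ensCov_eq_smul_gram, transpose_smul, transpose_mul, transpose_transpose]

theorem ensEnergy_eq_trace (z : Fin J → Fin d → ℝ) : ensEnergy J z = trace (ensCov J z) := by
  rw [ensCov_eq_smul_gram, trace_smul, ← frobNorm_sq_eq_trace, frobNorm_sq, smul_eq_mul,
    ensEnergy]
  rfl

theorem ensEnergy_nonneg (z : Fin J → Fin d → ℝ) : 0 ≤ ensEnergy J z := by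
  unfold ensEnergy enormSq
  positivity

theorem frobNorm_ensCov_le (z : Fin J → Fin d → ℝ) : frobNorm (ensCov J z) ≤ ensEnergy J z := by
  rw [ensEnergy_eq_trace, ensCov_eq_smul_gram, frobNorm_smul, trace_smul, smul_eq_mul,
    abs_of_nonneg (by positivity)]
  gcongr
  exact frobNorm_transpose_mul_self_le_trace _

theorem sq_ensEnergy_le (z : Fin J → Fin d → ℝ) :
    ensEnergy J z ^ 2 ≤ J * frobNorm (ensCov J z) ^ 2 := by
  rw [ensEnergy_eq_trace, ensCov_eq_smul_gram, frobNorm_smul, trace_smul, smul_eq_mul,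
    abs_of_nonneg (by positivity), mul_pow, mul_pow, mul_left_comm]
  gcongr
  exact sq_trace_transpose_mul_self_le _

theorem ensSpread_affine (hJ : 0 < J) (M : Matrix (Fin d) (Fin d) ℝ) (c : Fin d → ℝ)
    (z : Fin J → Fin d → ℝ) (j : Fin J) :
    ensSpread J (fun i => M *ᵥ z i + c) j = M *ᵥ ensSpread J z j := by
  have hJ' : (J : ℝ) ≠ 0 := by exact_mod_cast hJ.ne'
  simp only [ensSpread, ensMean, Finset.sum_add_distrib, ← Matrix.mulVec_sum, Finset.sum_const,
    Finset.card_univ, Fintype.card_fin, ← Nat.cast_smul_eq_nsmul ℝ, smul_add, Matrix.mulVec_sub,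
    Matrix.mulVec_smul, smul_smul, inv_mul_cancel₀ hJ', one_smul]
  abel

theorem ensCov_affine (hJ : 0 < J) (M : Matrix (Fin d) (Fin d) ℝ) (c : Fin d → ℝ)
    (z : Fin J → Fin d → ℝ) :
    ensCov J (fun i => M *ᵥ z i + c) = M * ensCov J z * Mᵀ := by
  have hY : of (ensSpread J (fun i => M *ᵥ z i + c)) = of (ensSpread J z) * Mᵀ := by
    ext j i
    rw [of_apply, ensSpread_affine hJ]
    simp [Matrix.mul_apply, Matrix.mulVec, dotProduct, mul_comm]
  rw [ensCov_eq_smul_gram, ensCov_eq_smul_gram, hY, transpose_mul, transpose_transpose,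
    Matrix.mul_smul, Matrix.smul_mul]
  simp only [Matrix.mul_assoc]

end Ensemble

theorem one_sub_smul_mul_conj_sub {n : ℕ} {C B : Matrix (Fin n) (Fin n) ℝ} (hC : Cᵀ = C)
    (hB : Bᵀ = B) (h : ℝ) :
    (1 - h • (C * B)) * C * (1 - h • (C * B))ᵀ - C
      = h ^ 2 • (C * B * (C * B * C)) - (2 * h) • (C * B * C) := by
  rw [transpose_sub, transpose_one, transpose_smul, transpose_mul, hC, hB]
  simp only [Matrix.mul_sub, Matrix.sub_mul, Matrix.mul_one, Matrix.one_mul, Matrix.smul_mul,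
    Matrix.mul_smul, Matrix.mul_assoc]
  module

section DekiStep

variable {d p J : ℕ} {α h Amax : ℝ} {S : Matrix (Fin p) (Fin d) ℝ}

def regGram (S : Matrix (Fin p) (Fin d) ℝ) (α : ℝ) : Matrix (Fin d) (Fin d) ℝ :=
  Sᵀ * S + α • 1

theorem regGram_transpose : (regGram S α)ᵀ = regGram S α := by
  rw [regGram, transpose_add, transpose_mul, transpose_transpose, transpose_smul, transpose_one]

theorem opNorm_regGram_le (hα : 0 ≤ α) (hS : opNorm (Sᵀ * S) ≤ Amax) :
    opNorm (regGram S α) ≤ Amax + α :=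
  (opNorm_add_smul_one_le _ hα).trans (by linarith)

theorem mul_frobNorm_sq_le_trace_mul_regGram_mul {C : Matrix (Fin d) (Fin d) ℝ} (hC : Cᵀ = C) :
    α * frobNorm C ^ 2 ≤ trace (C * regGram S α * C) := by
  have hdata : trace (C * (Sᵀ * S) * C) = frobNorm (S * C) ^ 2 := by
    rw [frobNorm_sq_eq_trace, transpose_mul, hC]
    simp only [Matrix.mul_assoc]
  rw [regGram, Matrix.mul_add, Matrix.add_mul, trace_add, hdata, Matrix.mul_smul, Matrix.mul_one,
    Matrix.smul_mul, trace_smul, smul_eq_mul, frobNorm_sq_eq_trace, hC]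
  exact le_add_of_nonneg_left (sq_nonneg _)

theorem frobNorm_ensCov_mul_frobNorm_regGram_mul_le (hα : 0 ≤ α) (hS : opNorm (Sᵀ * S) ≤ Amax)
    (z : Fin J → Fin d → ℝ) (X : Matrix (Fin d) (Fin d) ℝ) :
    frobNorm (ensCov J z) * frobNorm (regGram S α * X) ≤
      ensEnergy J z * (Amax + α) * frobNorm X := by
  rw [mul_assoc]
  exact mul_le_mul (frobNorm_ensCov_le z) ((frobNorm_mul_le_opNorm_mul _ _).trans
    (mul_le_mul_of_nonneg_right (opNorm_regGram_le hα hS) (frobNorm_nonneg X)))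
    (frobNorm_nonneg _) (ensEnergy_nonneg z)

theorem frobNorm_ensCov_mul_regGram_mul_le (hα : 0 ≤ α) (hS : opNorm (Sᵀ * S) ≤ Amax)
    (z : Fin J → Fin d → ℝ) (X : Matrix (Fin d) (Fin d) ℝ) :
    frobNorm (ensCov J z * regGram S α * X) ≤ ensEnergy J z * (Amax + α) * frobNorm X := by
  rw [Matrix.mul_assoc]
  exact (frobNorm_mul_le _ _).trans (frobNorm_ensCov_mul_frobNorm_regGram_mul_le hα hS z X)

theorem trace_ensCov_mul_regGram_mul_le (hα : 0 ≤ α) (hS : opNorm (Sᵀ * S) ≤ Amax)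
    (z : Fin J → Fin d → ℝ) (X : Matrix (Fin d) (Fin d) ℝ) :
    trace (ensCov J z * regGram S α * X) ≤ ensEnergy J z * (Amax + α) * frobNorm X := by
  rw [Matrix.mul_assoc]
  exact (trace_mul_le_frobNorm_mul _ _).trans
    (frobNorm_ensCov_mul_frobNorm_regGram_mul_le hα hS z X)

theorem frobNorm_ensCov_mul_regGram_mul_ensCov_le (hα : 0 ≤ α) (hS : opNorm (Sᵀ * S) ≤ Amax)
    (z : Fin J → Fin d → ℝ) :
    frobNorm (ensCov J z * regGram S α * ensCov J z) ≤ (Amax + α) * ensEnergy J z ^ 2 := by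
  have hAα : 0 ≤ Amax + α := (opNorm_nonneg _).trans (opNorm_regGram_le hα hS)
  calc _ ≤ ensEnergy J z * (Amax + α) * frobNorm (ensCov J z) :=
        frobNorm_ensCov_mul_regGram_mul_le hα hS z _
    _ ≤ ensEnergy J z * (Amax + α) * ensEnergy J z := by
        gcongr
        · exact mul_nonneg (ensEnergy_nonneg z) hAα
        · exact frobNorm_ensCov_le z
    _ = (Amax + α) * ensEnergy J z ^ 2 := by ring

variable {u : Fin p → ℝ}

def dekiStep (h α : ℝ) (S : Matrix (Fin p) (Fin d) ℝ) (u : Fin p → ℝ) (z : Fin J → Fin d → ℝ) :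
    Fin J → Fin d → ℝ :=
  fun j => z j - h • (ensCov J z *ᵥ (Sᵀ *ᵥ (S *ᵥ z j - u) + α • z j))

theorem dekiStep_eq_affine (z : Fin J → Fin d → ℝ) :
    dekiStep h α S u z = fun j =>
      (1 - h • (ensCov J z * regGram S α)) *ᵥ z j + h • (ensCov J z *ᵥ (Sᵀ *ᵥ u)) := by
  funext j
  simp only [dekiStep, regGram, Matrix.sub_mulVec, Matrix.one_mulVec, Matrix.smul_mulVec,
    ← Matrix.mulVec_mulVec, Matrix.add_mulVec, Matrix.smul_mulVec, Matrix.mulVec_sub,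
    Matrix.mulVec_add, Matrix.mulVec_smul]
  module

theorem ensCov_dekiStep_sub (hJ : 0 < J) (z : Fin J → Fin d → ℝ) :
    ensCov J (dekiStep h α S u z) - ensCov J z =
      h ^ 2 • (ensCov J z * regGram S α * (ensCov J z * regGram S α * ensCov J z))
        - (2 * h) • (ensCov J z * regGram S α * ensCov J z) := by
  rw [dekiStep_eq_affine, ensCov_affine hJ]
  exact one_sub_smul_mul_conj_sub (ensCov_transpose z) regGram_transpose h

theorem frobNorm_ensCov_dekiStep_sub_le (hJ : 0 < J) (hα : 0 ≤ α) (hh : 0 ≤ h)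
    (hS : opNorm (Sᵀ * S) ≤ Amax) (z : Fin J → Fin d → ℝ) :
    frobNorm (ensCov J (dekiStep h α S u z) - ensCov J z) ≤
      2 * h * (Amax + α) * ensEnergy J z ^ 2 + h ^ 2 * (Amax + α) ^ 2 * ensEnergy J z ^ 3 := by
  have hAα : 0 ≤ Amax + α := (opNorm_nonneg _).trans (opNorm_regGram_le hα hS)
  have hCBC := frobNorm_ensCov_mul_regGram_mul_ensCov_le hα hS z
  have hCBCBC : frobNorm (ensCov J z * regGram S α * (ensCov J z * regGram S α * ensCov J z)) ≤
      (Amax + α) ^ 2 * ensEnergy J z ^ 3 := by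
    calc _ ≤ ensEnergy J z * (Amax + α) * ((Amax + α) * ensEnergy J z ^ 2) :=
          (frobNorm_ensCov_mul_regGram_mul_le hα hS z _).trans
            (mul_le_mul_of_nonneg_left hCBC (mul_nonneg (ensEnergy_nonneg z) hAα))
      _ = (Amax + α) ^ 2 * ensEnergy J z ^ 3 := by ring
  rw [ensCov_dekiStep_sub hJ]
  refine (frobNorm_sub_le _ _).trans ?_
  rw [frobNorm_smul, frobNorm_smul, abs_of_nonneg (by positivity), abs_of_nonneg (by positivity)]
  linear_combination mul_le_mul_of_nonneg_left hCBCBC (sq_nonneg h)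
    + mul_le_mul_of_nonneg_left hCBC (by positivity : (0 : ℝ) ≤ 2 * h)

theorem ensEnergy_dekiStep_le (hJ : 0 < J) (hα : 0 ≤ α) (hh : 0 ≤ h)
    (hS : opNorm (Sᵀ * S) ≤ Amax) (z : Fin J → Fin d → ℝ) :
    ensEnergy J (dekiStep h α S u z) ≤
      ensEnergy J z - 2 * (h * α / J) * ensEnergy J z ^ 2
        + h ^ 2 * (Amax + α) ^ 2 * ensEnergy J z ^ 3 := by
  have hAα : 0 ≤ Amax + α := (opNorm_nonneg _).trans (opNorm_regGram_le hα hS)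
  have hJ' : (0 : ℝ) < J := by exact_mod_cast hJ
  have hincr := congrArg trace (ensCov_dekiStep_sub (h := h) (α := α) (S := S) (u := u) hJ z)
  rw [trace_sub, trace_sub, trace_smul, trace_smul, ← ensEnergy_eq_trace, ← ensEnergy_eq_trace,
    smul_eq_mul, smul_eq_mul] at hincr
  have hdissip : α / J * ensEnergy J z ^ 2 ≤ trace (ensCov J z * regGram S α * ensCov J z) := by
    refine le_trans ?_ (mul_frobNorm_sq_le_trace_mul_regGram_mul (ensCov_transpose z))
    rw [div_mul_eq_mul_div, div_le_iff₀ hJ', mul_assoc]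
    exact mul_le_mul_of_nonneg_left ((sq_ensEnergy_le z).trans_eq (mul_comm _ _)) hα
  have hcubic : trace (ensCov J z * regGram S α * (ensCov J z * regGram S α * ensCov J z)) ≤
      (Amax + α) ^ 2 * ensEnergy J z ^ 3 := by
    calc _ ≤ ensEnergy J z * (Amax + α) * ((Amax + α) * ensEnergy J z ^ 2) :=
          (trace_ensCov_mul_regGram_mul_le hα hS z _).trans
            (mul_le_mul_of_nonneg_left (frobNorm_ensCov_mul_regGram_mul_ensCov_le hα hS z)
              (mul_nonneg (ensEnergy_nonneg z) hAα))
      _ = (Amax + α) ^ 2 * ensEnergy J z ^ 3 := by ring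
  linear_combination hincr + mul_le_mul_of_nonneg_left hcubic (sq_nonneg h)
    + mul_le_mul_of_nonneg_left hdissip (by positivity : (0 : ℝ) ≤ 2 * h)

end DekiStep

theorem le_init_and_mul_succ_le_one_of_le_sub_mul_sq {c : ℝ} {E : ℕ → ℝ} (hc : 0 ≤ c)
    (hE : ∀ t, 0 ≤ E t) (hcE : c * E 0 ≤ 1) (hrec : ∀ t, E t ≤ E 0 → E (t + 1) ≤ E t - c * E t ^ 2)
    (t : ℕ) : E t ≤ E 0 ∧ c * (t + 1) * E t ≤ 1 := by
  induction t with
  | zero => simpa using hcE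
  | succ t ih =>
    obtain ⟨hle, hdecay⟩ := ih
    have hstep := hrec t hle
    have hy : c * E t ≤ 1 :=
      le_trans (by nlinarith [mul_nonneg (mul_nonneg hc t.cast_nonneg) (hE t)]) hdecay
    refine ⟨by nlinarith [hE t], ?_⟩
    -- with `y = c E_t ≤ 1/(t+1)`, the map `y ↦ (t+2)(y - y²)` stays below 1
    push_cast
    nlinarith [mul_le_mul_of_nonneg_left hstep (by positivity : (0 : ℝ) ≤ c * (t + 1 + 1)),
      mul_nonneg (sub_nonneg.2 hdecay) (sub_nonneg.2 hy), sq_nonneg (c * E t)]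

theorem sq_mul_sq_mul_pow_three_le_of_mul_le {J h α a E E₀ : ℝ} (ha : 0 < a) (hh : 0 ≤ h)
    (hEE₀ : E ≤ E₀) (hstep : h * E₀ ≤ α / (J * a ^ 2)) :
    h ^ 2 * a ^ 2 * E ^ 3 ≤ h * α / J * E ^ 2 := by
  calc h ^ 2 * a ^ 2 * E ^ 3 = h * E * a ^ 2 * (h * E ^ 2) := by ring
    _ ≤ α / (J * a ^ 2) * a ^ 2 * (h * E ^ 2) := by
      gcongr
      exact (mul_le_mul_of_nonneg_left hEE₀ hh).trans hstep
    _ = h * α / J * E ^ 2 := by field_simp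

theorem mul_sq_le_div_sq_div_sq_of_mul_mul_le_one {a c x E : ℝ} (ha : 0 ≤ a) (hc : 0 < c)
    (hx : 0 < x) (hE : 0 ≤ E) (hcxE : c * x * E ≤ 1) : a * E ^ 2 ≤ a / c ^ 2 / x ^ 2 := by
  rw [div_div, le_div_iff₀ (by positivity)]
  calc a * E ^ 2 * (c ^ 2 * x ^ 2) = a * (c * x * E) ^ 2 := by ring
    _ ≤ a := mul_le_of_le_one_right ha (pow_le_one₀ (mul_nonneg (by positivity) hE) hcxE)

theorem deki_covariance_increment_bound_general
    {d p J : ℕ} (hJ : 0 < J)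
    (α h Amax : ℝ) (hα : 0 < α) (hh : 0 < h)
    (S : ℕ → Matrix (Fin p) (Fin d) ℝ) (u : ℕ → Fin p → ℝ)
    (z : ℕ → Fin J → Fin d → ℝ)
    (hupd : ∀ t j, z (t+1) j = z t j -
      h • ((ensCov J (z t)) *ᵥ ((S (t+1))ᵀ *ᵥ ((S (t+1)) *ᵥ (z t j) - u (t+1)) + α • z t j)))
    (hA : ∀ t : ℕ, 1 ≤ t → opNorm ((S t)ᵀ * (S t)) ≤ Amax) :
    (∀ t : ℕ, frobNorm (ensCov J (z (t+1)) - ensCov J (z t)) ≤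
        2*h*(Amax + α) * (ensEnergy J (z t))^2
        + h^2*(Amax + α)^2 * (ensEnergy J (z t))^3) ∧
    (0 < ensEnergy J (z 0) →
      h ≤ min (α / ((J:ℝ) * (Amax + α)^2)) ((J:ℝ)/α) * (ensEnergy J (z 0))⁻¹ →
      ∃ K > 0, ∀ t : ℕ,
        frobNorm (ensCov J (z (t+1)) - ensCov J (z t)) ≤ K / ((t:ℝ) + 1)^2) := by
  have hz : ∀ t, z (t + 1) = dekiStep h α (S (t + 1)) (u (t + 1)) (z t) := fun t => funext (hupd t)
  have hS : ∀ t, opNorm ((S (t + 1))ᵀ * S (t + 1)) ≤ Amax := fun t => hA (t + 1) (by omega)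
  have hincr : ∀ t, frobNorm (ensCov J (z (t+1)) - ensCov J (z t)) ≤
      2*h*(Amax + α) * (ensEnergy J (z t))^2 + h^2*(Amax + α)^2 * (ensEnergy J (z t))^3 :=
    fun t => hz t ▸ frobNorm_ensCov_dekiStep_sub_le hJ hα.le hh.le (hS t) (z t)
  refine ⟨hincr, fun hE0 hstep => ?_⟩
  set E : ℕ → ℝ := fun t => ensEnergy J (z t)
  set c := h * α / J
  have hJ' : (0 : ℝ) < J := by exact_mod_cast hJ
  have hAα : 0 < Amax + α := by linarith [(opNorm_nonneg _).trans (hA 1 le_rfl)]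
  rw [le_mul_inv_iff₀ hE0, le_min_iff] at hstep
  have hcE0 : c * E 0 ≤ 1 := by
    calc c * E 0 = h * E 0 * α / J := by ring
      _ ≤ J / α * α / J := by gcongr; exact hstep.2
      _ = 1 := by field_simp
  have hcubic : ∀ t, E t ≤ E 0 → h ^ 2 * (Amax + α) ^ 2 * E t ^ 3 ≤ c * E t ^ 2 := fun t ht =>
    sq_mul_sq_mul_pow_three_le_of_mul_le hAα hh.le ht hstep.1
  have hdecay := le_init_and_mul_succ_le_one_of_le_sub_mul_sq (E := E) (by positivity)
    (fun t => ensEnergy_nonneg _) hcE0 fun t ht => by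
      have := hz t ▸ ensEnergy_dekiStep_le hJ hα.le hh.le (hS t) (z t)
      linarith [hcubic t ht]
  refine ⟨(2 * h * (Amax + α) + c) / c ^ 2, by positivity, fun t => ?_⟩
  obtain ⟨hEt, hct⟩ := hdecay t
  calc _ ≤ (2 * h * (Amax + α) + c) * E t ^ 2 := by linarith [hincr t, hcubic t hEt]
    _ ≤ _ := mul_sq_le_div_sq_div_sq_of_mul_mul_le_one (by positivity) (by positivity)
      (by positivity) (ensEnergy_nonneg _) hct

/-- Covariance increment bound (increment part of Lemma 3.2):
`‖C_{t+1} − C_t‖_F ≤ 2h(A_max + α)·E_t² + h²(A_max + α)²·E_t³` whenever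
`‖A_{t+1}‖ ≤ A_max`; and under the step-size and initial-energy conditions there is
`K > 0` with `‖C_{t+1} − C_t‖_F ≤ K/(t+1)²` for all `t`. -/
theorem deki_covariance_increment_bound
    {d p J : ℕ} (hd : 0 < d) (hp : 0 < p) (hJ : 0 < J)
    (α h Amax : ℝ) (hα : 0 < α) (hh : 0 < h) (hAmax : 0 < Amax)
    (S : ℕ → Matrix (Fin p) (Fin d) ℝ) (u : ℕ → Fin p → ℝ)
    (z : ℕ → Fin J → Fin d → ℝ)
    (hupd : ∀ t j, z (t+1) j = z t j -
      h • ((ensCov J (z t)) *ᵥ ((S (t+1))ᵀ *ᵥ ((S (t+1)) *ᵥ (z t j) - u (t+1)) + α • z t j)))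
    (hA : ∀ t : ℕ, 1 ≤ t → opNorm ((S t)ᵀ * (S t)) ≤ Amax) :
    (∀ t : ℕ, frobNorm (ensCov J (z (t+1)) - ensCov J (z t)) ≤
        2*h*(Amax + α) * (ensEnergy J (z t))^2
        + h^2*(Amax + α)^2 * (ensEnergy J (z t))^3) ∧
    (0 < ensEnergy J (z 0) →
      h ≤ min (α / ((J:ℝ) * (Amax + α)^2)) ((J:ℝ)/α) * (ensEnergy J (z 0))⁻¹ →
      ∃ K > 0, ∀ t : ℕ,
        frobNorm (ensCov J (z (t+1)) - ensCov J (z t)) ≤ K / ((t:ℝ) + 1)^2) :=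
  deki_covariance_increment_bound_general hJ α h Amax hα hh S u z hupd hA
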